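/- arXiv:1104.5311 — 5 statements merged into one kernel-verified Lean document; each statement's English description precedes it below -/
import Mathlib

section
/- An iterative structure (A, e, s) admits recursion if and only if (i) it admits induction, (ii) e is not in the range of s, and (iii) s is injective. -/
universe u v

/-- An iterative structure `(A, e, s)` admits induction if every subset of `A`
containing `e` and closed under `s` is all of `A`. -/
def AdmitsInduction {A : Type u} (e : A) (s : A → A) : Prop :=
  ∀ S : Set A, e ∈ S → (∀ x ∈ S, s x ∈ S) → S = Set.univ

/-- An iterative structure `(A, e, s)` admits recursion if to every iterative
structure `(B, b, g)` there is a unique homomorphism. -/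
def AdmitsRecursion {A : Type u} (e : A) (s : A → A) : Prop :=
  ∀ (B : Type v) (b : B) (g : B → B),
    ∃! h : A → B, h e = b ∧ ∀ x, h (s x) = g (h x)

/-- The graph of the recursively defined map. -/
inductive RecGraph {A : Type u} {B : Type v} (e : A) (s : A → A) (b : B) (g : B → B) :
    A → B → Prop
  | base : RecGraph e s b g e b
  | step (x : A) (y : B) : RecGraph e s b g x y → RecGraph e s b g (s x) (g y)

/-- An iterative structure admits recursion if and only if it admits induction,
`e` is not in the range of `s`, and `s` is injective. -/
theorem admitsRecursion_iff {A : Type u} (e : A) (s : A → A) :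
    AdmitsRecursion.{u, v} e s ↔
      AdmitsInduction e s ∧ e ∉ Set.range s ∧ Function.Injective s := by
  constructor
  · intro hrec
    -- a height function H : A → ℕ
    obtain ⟨h, ⟨he, hs⟩, -⟩ := hrec (ULift.{v} ℕ) ⟨0⟩ (fun n => ⟨n.down + 1⟩)
    set H : A → ℕ := fun x => (h x).down with hH
    have He : H e = 0 := by simp [hH, he]
    have Hs : ∀ x, H (s x) = H x + 1 := fun x => by simp [hH, hs x]
    -- every element is e or in the range of s
    have F0 : ∀ x : A, x = e ∨ x ∈ Set.range s := by
      obtain ⟨h1, -, h1u⟩ := hrec (ULift.{v, 0} Prop) ⟨True⟩ (fun _ => ⟨True⟩)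
      have e1 : (fun x : A => (⟨x = e ∨ x ∈ Set.range s⟩ : ULift.{v, 0} Prop)) = h1 := by
        apply h1u
        constructor
        · exact congrArg ULift.up (by simp)
        · intro x
          exact congrArg ULift.up (by simp)
      have e2 : (fun _ : A => (⟨True⟩ : ULift.{v, 0} Prop)) = h1 := by
        apply h1u
        exact ⟨rfl, fun _ => rfl⟩
      intro x
      have := congrFun (e1.trans e2.symm) x
      have := congrArg ULift.down this
      simp only at this
      exact this ▸ trivial
    -- the canonical map k : ℕ → A
    set k : ℕ → A := fun n => s^[n] e with hk
    have kzero : k 0 = e := rfl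
    have ksucc : ∀ n, k (n + 1) = s (k n) := fun n => Function.iterate_succ_apply' s n e
    -- H ∘ k = id
    have Hk : ∀ n, H (k n) = n := by
      intro n
      induction n with
      | zero => simpa [kzero] using He
      | succ n ih => rw [ksucc, Hs, ih]
    -- k is surjective
    have ksurj : ∀ x : A, ∃ m, k m = x := by
      have key : ∀ n : ℕ, ∀ x : A, H x ≤ n → ∃ m, k m = x := by
        intro n
        induction n with
        | zero =>
          intro x hx
          rcases F0 x with rfl | ⟨y, rfl⟩
          · exact ⟨0, kzero⟩
          · rw [Hs] at hx; omega
        | succ n ih =>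
          intro x hx
          rcases F0 x with rfl | ⟨y, rfl⟩
          · exact ⟨0, kzero⟩
          · rw [Hs] at hx
            obtain ⟨m, rfl⟩ := ih y (by omega)
            exact ⟨m + 1, ksucc m⟩
      exact fun x => key (H x) x le_rfl
    -- the three conclusions
    refine ⟨?_, ?_, ?_⟩
    · intro S heS hsS
      apply Set.eq_univ_of_forall
      intro x
      obtain ⟨m, rfl⟩ := ksurj x
      induction m with
      | zero => exact heS
      | succ m ih => rw [ksucc]; exact hsS _ ih
    · rintro ⟨x, hx⟩
      have := Hs x
      rw [hx, He] at this
      omega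
    · intro a b hab
      obtain ⟨m, rfl⟩ := ksurj a
      obtain ⟨n, rfl⟩ := ksurj b
      have : H (s (k m)) = H (s (k n)) := congrArg H hab
      rw [Hs, Hs, Hk, Hk] at this
      have hmn : m = n := by omega
      rw [hmn]
  · rintro ⟨hind, hnr, hinj⟩ B b g
    -- total and functional graph
    have total : ∀ x : A, ∃ y, RecGraph e s b g x y := by
      have := hind {x | ∃ y, RecGraph e s b g x y} ⟨b, RecGraph.base⟩
        (fun x ⟨y, hy⟩ => ⟨g y, hy.step⟩)
      intro x
      exact (this ▸ Set.mem_univ x : x ∈ {x | ∃ y, RecGraph e s b g x y})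
    have inv : ∀ z y, RecGraph e s b g z y →
        (z = e ∧ y = b) ∨ ∃ x' y', z = s x' ∧ y = g y' ∧ RecGraph e s b g x' y' := by
      intro z y hzy
      cases hzy with
      | base => exact Or.inl ⟨rfl, rfl⟩
      | step x' y' h => exact Or.inr ⟨x', y', rfl, rfl, h⟩
    have funct : ∀ x : A, ∀ y₁ y₂, RecGraph e s b g x y₁ → RecGraph e s b g x y₂ → y₁ = y₂ := by
      have hcl : ∀ x ∈ {x : A | ∀ y₁ y₂, RecGraph e s b g x y₁ → RecGraph e s b g x y₂ → y₁ = y₂},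
          s x ∈ {x : A | ∀ y₁ y₂, RecGraph e s b g x y₁ → RecGraph e s b g x y₂ → y₁ = y₂} := by
        intro x hx y₁ y₂ h₁ h₂
        rcases inv _ _ h₁ with ⟨hse, rfl⟩ | ⟨x₁, z₁, hx₁, rfl, hz₁⟩
        · exact absurd ⟨x, hse⟩ hnr
        rcases inv _ _ h₂ with ⟨hse, rfl⟩ | ⟨x₂, z₂, hx₂, rfl, hz₂⟩
        · exact absurd ⟨x, hse⟩ hnr
        have e1 : x₁ = x := hinj hx₁.symm
        have e2 : x₂ = x := hinj hx₂.symm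
        rw [e1] at hz₁
        rw [e2] at hz₂
        rw [hx z₁ z₂ hz₁ hz₂]
      have hbase : e ∈ {x : A | ∀ y₁ y₂, RecGraph e s b g x y₁ → RecGraph e s b g x y₂ → y₁ = y₂} := by
        intro y₁ y₂ h₁ h₂
        rcases inv _ _ h₁ with ⟨-, rfl⟩ | ⟨x₁, z₁, hx₁, rfl, -⟩
        · rcases inv _ _ h₂ with ⟨-, rfl⟩ | ⟨x₂, z₂, hx₂, rfl, -⟩
          · rfl
          · exact absurd ⟨x₂, hx₂.symm⟩ hnr
        · exact absurd ⟨x₁, hx₁.symm⟩ hnr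
      have := hind _ hbase hcl
      intro x
      exact (this ▸ Set.mem_univ x : x ∈ _)
    choose F hF using total
    have hFspec : ∀ x y, RecGraph e s b g x y → F x = y := fun x y hy => funct x _ _ (hF x) hy
    refine ⟨F, ⟨hFspec e b RecGraph.base, fun x => hFspec _ _ ((hF x).step)⟩, ?_⟩
    rintro h' ⟨h'e, h's⟩
    funext x
    have : x ∈ {x : A | h' x = F x} := by
      have := hind {x : A | h' x = F x}
        (by simp only [Set.mem_setOf_eq]; rw [h'e, hFspec e b RecGraph.base])
        (by intro z hz
            simp only [Set.mem_setOf_eq] at hz ⊢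
            rw [h's z, hz, hFspec _ _ ((hF z).step)])
      exact this ▸ Set.mem_univ x
    exact this
end

section
/- For a positive integer n, every element x of ℤ/nℤ satisfies x^(n+1) = x if and only if n ∈ {1, 2, 6, 42, 1806}. -/
/-!
If `x ^ (k + 1) = x` on `ℤ/nℤ` with `k ≥ 1`, then `ℤ/nℤ` has no nilpotents, so `n` is
squarefree, and the identity passes to each quotient `𝔽_p`, `p ∣ n`, where it holds iff
`p - 1 ∣ k` because `𝔽_pˣ` is cyclic of order `p - 1`; conversely, for squarefree `n` these
local identities glue because `n` is the product of its prime factors. With `k = n` it remains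
to find the squarefree `n` with `p - 1 ∣ n` for every prime `p ∣ n`. Removing the largest prime
factor `p` of such an `n` leaves a number `m` of the same kind, since every `q - 1` with `q ≤ p`
is coprime to `p`; so `n = p * m` with `p - 1 ∣ m` and `p ∤ m`. Starting from `1`, this forces
the chain `1, 2, 6, 42, 1806`, and it stops there because `1807 = 13 * 139` is not prime.
-/

theorem isReduced_of_forall_pow_succ_eq_self {R : Type*} [MonoidWithZero R] {k : ℕ} (hk : k ≠ 0)
    (h : ∀ x : R, x ^ (k + 1) = x) : IsReduced R :=
  (isReduced_iff_pow_one_lt (k + 1) (by omega)).2 fun x hx => (h x).symm.trans hx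

theorem FiniteField.forall_pow_succ_eq_self_iff {K : Type*} [Field K] [Fintype K] (k : ℕ) :
    (∀ x : K, x ^ (k + 1) = x) ↔ Fintype.card K - 1 ∣ k := by
  rw [← forall_pow_eq_one_iff]
  constructor
  · intro h u
    ext
    push_cast
    exact mul_right_cancel₀ u.ne_zero (by rw [← pow_succ, h, one_mul])
  · intro h x
    rcases eq_or_ne x 0 with rfl | hx
    · simp
    · have hxk : x ^ k = 1 := by simpa using congrArg Units.val (h (Units.mk0 x hx))
      rw [pow_succ, hxk, one_mul]

namespace ZMod

theorem eq_zero_of_forall_castHom_eq_zero {n : ℕ} (hn : Squarefree n) {x : ZMod n}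
    (hx : ∀ p, p.Prime → ∀ hpn : p ∣ n, castHom hpn (ZMod p) x = 0) : x = 0 := by
  have : NeZero n := ⟨hn.ne_zero⟩
  rw [← natCast_zmod_val x, natCast_eq_zero_iff]
  refine (Nat.prod_primeFactors_of_squarefree hn).symm.dvd.trans <|
    Finset.prod_primes_dvd _ (fun p hp => (Nat.prime_of_mem_primeFactors hp).prime) fun p hp => ?_
  have hpx := hx p (Nat.prime_of_mem_primeFactors hp) (Nat.dvd_of_mem_primeFactors hp)
  rwa [← natCast_zmod_val x, map_natCast, natCast_eq_zero_iff] at hpx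

theorem forall_pow_succ_eq_self_iff {n : ℕ} [NeZero n] {k : ℕ} (hk : k ≠ 0) :
    (∀ x : ZMod n, x ^ (k + 1) = x) ↔ Squarefree n ∧ ∀ p, p.Prime → p ∣ n → p - 1 ∣ k := by
  constructor
  · intro h
    refine ⟨(isReduced_zmod.1 (isReduced_of_forall_pow_succ_eq_self hk h)).resolve_right
      (NeZero.ne n), fun p hp hpn => ?_⟩
    have := Fact.mk hp
    rw [← ZMod.card p, ← FiniteField.forall_pow_succ_eq_self_iff]
    intro y
    obtain ⟨x, rfl⟩ := castHom_surjective hpn y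
    rw [← map_pow, h]
  · rintro ⟨hsq, hdvd⟩ x
    rw [← sub_eq_zero]
    refine eq_zero_of_forall_castHom_eq_zero hsq fun p hp hpn => ?_
    have := Fact.mk hp
    rw [map_sub, map_pow, sub_eq_zero]
    exact (FiniteField.forall_pow_succ_eq_self_iff k).2 (by rw [ZMod.card]; exact hdvd p hp hpn) _

end ZMod

namespace Nat

theorem mul_mem_of_sub_one_dvd {m p : ℕ} (hm : m ∈ ({1, 2, 6, 42, 1806} : Finset ℕ))
    (hp : p.Prime) (hp_sub : p - 1 ∣ m) (hp_dvd : ¬p ∣ m) :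
    p * m ∈ ({1, 2, 6, 42, 1806} : Finset ℕ) := by
  have hstep : ∀ m ∈ ({1, 2, 6, 42, 1806} : Finset ℕ), ∀ d ∈ m.divisors, (d + 1).Prime →
      ¬(d + 1) ∣ m → (d + 1) * m ∈ ({1, 2, 6, 42, 1806} : Finset ℕ) := by
    simp only [divisors_ofNat, Finset.mem_insert, Finset.mem_singleton, forall_eq_or_imp,
      forall_eq]
    norm_num
  have hm0 : m ≠ 0 := by rintro rfl; simp at hm
  have hd := hstep m hm (p - 1) (mem_divisors.2 ⟨hp_sub, hm0⟩)
  rw [Nat.sub_add_cancel hp.one_le] at hd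
  exact hd hp hp_dvd

theorem mem_of_squarefree_of_forall_sub_one_dvd {n : ℕ} (hn : n ≠ 0) (hsq : Squarefree n)
    (hdvd : ∀ p, p.Prime → p ∣ n → p - 1 ∣ n) : n ∈ ({1, 2, 6, 42, 1806} : Finset ℕ) := by
  induction n using Nat.strong_induction_on with
  | _ n ih =>
  rcases eq_or_ne n 1 with rfl | hn1
  · simp
  obtain ⟨p, hp_mem, hp_max⟩ :=
    n.primeFactors.exists_max_image id (nonempty_primeFactors.2 (by omega))
  obtain ⟨hp, ⟨m, rfl⟩, -⟩ := mem_primeFactors.1 hp_mem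
  have hm0 : m ≠ 0 := right_ne_zero_of_mul hn
  have hpm : ¬p ∣ m := fun h => hp.not_isUnit (hsq p (mul_dvd_mul_left p h))
  -- `q - 1 < p` for every prime `q ∣ p * m`, so `q - 1` is coprime to `p`
  have hsub : ∀ q, q.Prime → q ∣ p * m → q - 1 ∣ m := fun q hq hqn => by
    have hqp : q ≤ p := hp_max q (mem_primeFactors.2 ⟨hq, hqn, hn⟩)
    have hq2 := hq.two_le
    exact (coprime_of_lt_prime (by omega) (by omega) hp).symm.dvd_of_dvd_mul_left (hdvd q hq hqn)
  have hm : m ∈ ({1, 2, 6, 42, 1806} : Finset ℕ) :=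
    ih m ((lt_mul_iff_one_lt_left (pos_of_ne_zero hm0)).2 hp.one_lt) hm0
      (hsq.squarefree_of_dvd (dvd_mul_left m p))
      fun q hq hqm => hsub q hq (dvd_mul_of_dvd_right hqm p)
  exact mul_mem_of_sub_one_dvd hm hp (hsub p hp (dvd_mul_right p m)) hpm

theorem squarefree_and_forall_sub_one_dvd_iff {n : ℕ} (hn : n ≠ 0) :
    (Squarefree n ∧ ∀ p, p.Prime → p ∣ n → p - 1 ∣ n) ↔
      n ∈ ({1, 2, 6, 42, 1806} : Finset ℕ) := by
  refine ⟨fun h => mem_of_squarefree_of_forall_sub_one_dvd hn h.1 h.2, fun h => ⟨?_, ?_⟩⟩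
  · rw [squarefree_iff_nodup_primeFactorsList hn]
    simp only [Finset.mem_insert, Finset.mem_singleton] at h
    rcases h with rfl | rfl | rfl | rfl | rfl <;> simp [primeFactorsList_ofNat]
  · have hdiv : ∀ n ∈ ({1, 2, 6, 42, 1806} : Finset ℕ), ∀ p ∈ n.divisors, p.Prime →
        p - 1 ∣ n := by
      simp only [divisors_ofNat, Finset.mem_insert, Finset.mem_singleton, forall_eq_or_imp,
        forall_eq]
      norm_num
    exact fun p hp hpn => hdiv n h p (mem_divisors.2 ⟨hpn, hn⟩) hp

end Nat

/-- For a positive integer `n`, every `x` in `ℤ/nℤ` satisfies `x ^ (n + 1) = x`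
if and only if `n ∈ {1, 2, 6, 42, 1806}`. -/
theorem zmod_pow_succ_eq_self_iff (n : ℕ) (hn : 0 < n) :
    (∀ x : ZMod n, x ^ (n + 1) = x) ↔ n ∈ ({1, 2, 6, 42, 1806} : Set ℕ) := by
  have : NeZero n := ⟨hn.ne'⟩
  rw [ZMod.forall_pow_succ_eq_self_iff hn.ne', Nat.squarefree_and_forall_sub_one_dvd_iff hn.ne']
  simp only [Finset.mem_insert, Finset.mem_singleton, Set.mem_insert_iff, Set.mem_singleton_iff]
end

section
/- A prime p is good if and only if p ∈ {2, 3, 7, 43}. -/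
/-- A prime `p` is good if `p - 1` is squarefree and every prime factor of
`p - 1` is good. -/
inductive Good : ℕ → Prop where
  | intro (p : ℕ) (hp : p.Prime) (hsq : Squarefree (p - 1))
      (hrec : ∀ q : ℕ, q.Prime → q ∣ p - 1 → Good q) : Good p

/-!
If `p` is good then, inductively, every prime factor of `p - 1` lies in `{2, 3, 7, 43}`; since
`p - 1` is squarefree it divides `2 * 3 * 7 * 43 = 1806`, and the only divisors `d` of `1806` with
`d + 1` prime are `1, 2, 6, 42`. Conversely `2, 3, 7, 43` are good in turn, because
`1, 2, 2 * 3, 2 * 3 * 7` are squarefree products of the primes before them.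
-/

theorem Squarefree.dvd_prod_of_primeFactors_subset {n : ℕ} {s : Finset ℕ} (hn : Squarefree n)
    (h : n.primeFactors ⊆ s) : n ∣ ∏ q ∈ s, q :=
  Nat.prod_primeFactors_of_squarefree hn ▸ Finset.prod_dvd_prod_of_subset _ _ _ h

namespace Good

theorem of_primeFactors {p : ℕ} (hp : p.Prime) (hsq : Squarefree (p - 1))
    (h : ∀ q ∈ (p - 1).primeFactors, Good q) : Good p :=
  Good.intro p hp hsq fun q hq hdvd => h q (Nat.mem_primeFactors.mpr ⟨hq, hdvd, hsq.ne_zero⟩)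

theorem two : Good 2 :=
  .of_primeFactors Nat.prime_two (by decide +kernel) (by simp)

theorem three : Good 3 :=
  .of_primeFactors Nat.prime_three (by decide +kernel) (by simp [Nat.prime_two.primeFactors, two])

theorem seven : Good 7 := by
  refine .of_primeFactors (by norm_num) (by decide +kernel) ?_
  rw [show Nat.primeFactors (7 - 1) = {2, 3} by decide +kernel]
  simp [two, three]

theorem fortyThree : Good 43 := by
  refine .of_primeFactors (by norm_num) (by decide +kernel) ?_
  rw [show Nat.primeFactors (43 - 1) = {2, 3, 7} by decide +kernel]
  simp [two, three, seven]

theorem mem_two_three_seven_fortyThree {p : ℕ} (h : Good p) :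
    p ∈ ({2, 3, 7, 43} : Finset ℕ) := by
  induction h with
  | intro p hp hsq _ ih =>
    have hdvd : p - 1 ∣ 1806 := hsq.dvd_prod_of_primeFactors_subset fun q hq =>
      ih q (Nat.prime_of_mem_primeFactors hq) (Nat.dvd_of_mem_primeFactors hq)
    have hcheck : ∀ d ∈ Nat.divisors 1806, (d + 1).Prime →
        d + 1 ∈ ({2, 3, 7, 43} : Finset ℕ) := by
      decide +kernel
    have hsucc : p - 1 + 1 = p := Nat.sub_add_cancel hp.one_le
    simpa [hsucc] using
      hcheck (p - 1) (Nat.mem_divisors.mpr ⟨hdvd, by norm_num⟩) (hsucc.symm ▸ hp)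

end Good

theorem good_iff_general (p : ℕ) :
    Good p ↔ p = 2 ∨ p = 3 ∨ p = 7 ∨ p = 43 := by
  constructor
  · intro h
    simpa using h.mem_two_three_seven_fortyThree
  · rintro (rfl | rfl | rfl | rfl)
    exacts [Good.two, Good.three, Good.seven, Good.fortyThree]

/-- A prime `p` is good if and only if `p ∈ {2, 3, 7, 43}`. -/
theorem good_iff (p : ℕ) (hp : p.Prime) :
    Good p ↔ p = 2 ∨ p = 3 ∨ p = 7 ∨ p = 43 :=
  good_iff_general p
end

section
/- Let L be a first-order language with no relation symbols, and let M be an L-structure. Then M admits recursion (i.e., for every L-structure N there is a unique L-homomorphism from M to N) if and only if M admits induction (i.e., the only L-substructure of M is M itself), every interpreted function of M is injective, and the ranges of the interpreted functions of distinct function symbols (of any arities) are pairwise disjoint. -/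
/-!
Recursion ⇒ the three conditions: a substructure `S` receives a homomorphism from `M`, whose
composite with the inclusion is the identity by uniqueness, so `S = ⊤`. For injectivity and
disjointness, a homomorphism `φ : M → M × D` into `M` decorated with any descriptor
`d f xs : D` of the top-level symbol and arguments satisfies `Prod.fst ∘ φ = id`, so
`φ (funMap f xs) = (funMap f xs, d f xs)`: the value `funMap f xs` determines `d f xs`
(a form of Lambek's lemma that stays inside the universe of `M`).

The three conditions ⇒ recursion: induction makes realization of closed terms surjective,
injectivity and disjointness make it injective, so `M` is the term algebra, and realizing in
`N` the term that names an element is the unique homomorphism.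
-/

open FirstOrder FirstOrder.Language FirstOrder.Language.Structure

universe u v w

namespace FirstOrder.Language

variable {L : Language.{u, v}} {M : Type w} [L.Structure M]

variable (L) in
def IsHom {N : Type*} [L.Structure N] (φ : M → N) : Prop :=
  ∀ (n : ℕ) (f : L.Functions n) (xs : Fin n → M), φ (funMap f xs) = funMap f (φ ∘ xs)

def AdmitsRecursion (L : Language.{u, v}) (M : Type w) [L.Structure M] : Prop :=
  ∀ (N : Type w) [L.Structure N], ∃! φ : M → N, IsHom L φ

namespace IsHom

variable {N P : Type*} [L.Structure N] [L.Structure P]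

theorem id : IsHom L (id : M → M) := fun _ _ _ => rfl

theorem comp {ψ : N → P} {φ : M → N} (hψ : IsHom L ψ) (hφ : IsHom L φ) :
    IsHom L (ψ ∘ φ) :=
  fun n f xs => by rw [Function.comp_apply, hφ, hψ]; rfl

theorem subtype (S : L.Substructure M) : IsHom L (Subtype.val : S → M) :=
  fun _ f xs => S.subtype.map_fun f xs

theorem realize_term {φ : M → N} (hφ : IsHom L φ) {α : Type*} (v : α → M) (t : L.Term α) :
    φ (t.realize v) = t.realize (φ ∘ v) := by
  induction t with
  | var => rfl
  | func f ts ih => simp only [Term.realize_func, hφ _ f, Function.comp_def, ih]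

theorem eq_of_surjective_realize
    (hsurj : Function.Surjective fun t : L.Term Empty => t.realize (Empty.elim : Empty → M))
    {φ ψ : M → N} (hφ : IsHom L φ) (hψ : IsHom L ψ) : φ = ψ := by
  funext m
  obtain ⟨t, rfl⟩ := hsurj m
  rw [hφ.realize_term, hψ.realize_term, Subsingleton.elim (φ ∘ Empty.elim) (ψ ∘ Empty.elim)]

end IsHom

namespace AdmitsRecursion

theorem eq_id (hM : AdmitsRecursion L M) {φ : M → M} (hφ : IsHom L φ) : φ = id :=
  (hM M).unique hφ IsHom.id

theorem eq_top (hM : AdmitsRecursion L M) (S : L.Substructure M) : S = ⊤ := by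
  obtain ⟨φ, hφ, -⟩ := hM S
  have hid : Subtype.val ∘ φ = id := hM.eq_id ((IsHom.subtype S).comp hφ)
  refine eq_top_iff.2 fun m _ => ?_
  have hm : (φ m : M) = m := congrFun hid m
  exact hm ▸ (φ m).2

theorem descriptor_eq_of_funMap_eq (hM : AdmitsRecursion L M) {D : Type w}
    (d : ∀ {n}, L.Functions n → (Fin n → M) → D)
    {m n : ℕ} {f : L.Functions m} {g : L.Functions n} {xs : Fin m → M} {ys : Fin n → M}
    (h : funMap f xs = funMap g ys) : d f xs = d g ys := by
  let _ : L.Structure (M × D) :=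
    { funMap := fun f zs => (funMap f (Prod.fst ∘ zs), d f (Prod.fst ∘ zs))
      RelMap := fun _ _ => False }
  obtain ⟨φ, hφ, -⟩ := hM (M × D)
  have hfst : Prod.fst ∘ φ = id := hM.eq_id (IsHom.comp (ψ := Prod.fst) (fun _ _ _ => rfl) hφ)
  have hφ_funMap : ∀ (k : ℕ) (e : L.Functions k) (zs : Fin k → M),
      (φ (funMap e zs)).2 = d e zs := fun k e zs => by
    rw [hφ]
    change d e (Prod.fst ∘ (φ ∘ zs)) = d e zs
    rw [← Function.comp_assoc, hfst]
    rfl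
  rw [← hφ_funMap, ← hφ_funMap, h]

theorem funMap_injective (hM : AdmitsRecursion L M) (n : ℕ) (f : L.Functions n) :
    Function.Injective (fun xs : Fin n → M => funMap f xs) := fun _ _ h =>
  sigma_mk_injective
    (hM.descriptor_eq_of_funMap_eq (D := Σ k, Fin k → M) (fun {k} _ zs => ⟨k, zs⟩) h)

theorem funMap_ne_funMap (hM : AdmitsRecursion L M) {m n : ℕ}
    {f : L.Functions m} {g : L.Functions n}
    (hfg : (⟨m, f⟩ : Σ k, L.Functions k) ≠ ⟨n, g⟩)
    (xs : Fin m → M) (ys : Fin n → M) :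
    funMap f xs ≠ funMap g ys := fun h =>
  have hd := hM.descriptor_eq_of_funMap_eq (D := ULift Prop)
    (fun {k} e _ => ULift.up ((⟨k, e⟩ : Σ k, L.Functions k) = ⟨m, f⟩)) h
  hfg (cast (congrArg ULift.down hd) rfl).symm

end AdmitsRecursion

theorem surjective_realize_of_forall_eq_top (hind : ∀ S : L.Substructure M, S = ⊤) :
    Function.Surjective fun t : L.Term Empty => t.realize (Empty.elim : Empty → M) := by
  let S : L.Substructure M :=
    { carrier := Set.range fun t : L.Term Empty => t.realize Empty.elim
      fun_mem := fun f xs hxs => by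
        choose ts hts using hxs
        exact ⟨.func f ts, by simp only [Term.realize_func, hts]⟩ }
  intro m
  have hm : m ∈ S := (hind S).symm ▸ Substructure.mem_top m
  exact hm

theorem injective_realize_of_funMap_injective
    (hinj : ∀ (n : ℕ) (f : L.Functions n),
      Function.Injective fun xs : Fin n → M => funMap f xs)
    (hdisj : ∀ (m n : ℕ) (f : L.Functions m) (g : L.Functions n),
      (⟨m, f⟩ : Σ k, L.Functions k) ≠ ⟨n, g⟩ →
        ∀ (xs : Fin m → M) (ys : Fin n → M), funMap f xs ≠ funMap g ys) :
    Function.Injective fun t : L.Term Empty => t.realize (Empty.elim : Empty → M) := by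
  intro t
  induction t with
  | var x => exact x.elim
  | func f ts ih =>
    rintro (x | ⟨g, us⟩) h
    · exact x.elim
    simp only [Term.realize_func] at h
    have hfg : (⟨_, f⟩ : Σ k, L.Functions k) = ⟨_, g⟩ :=
      Classical.byContradiction fun hne => hdisj _ _ f g hne _ _ h
    obtain ⟨rfl, hfg⟩ := Sigma.mk.inj_iff.1 hfg
    cases eq_of_heq hfg
    exact congrArg (Term.func f) (funext fun i => ih i (congrFun (hinj _ f h) i))

theorem admitsRecursion_of_bijective_realize
    (hbij : Function.Bijective fun t : L.Term Empty => t.realize (Empty.elim : Empty → M)) :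
    AdmitsRecursion L M := by
  intro N _
  let e := Equiv.ofBijective _ hbij
  have he_symm : ∀ (n : ℕ) (f : L.Functions n) (xs : Fin n → M),
      e.symm (funMap f xs) = .func f (e.symm ∘ xs) := fun n f xs =>
    e.symm_apply_eq.2 <| by
      change funMap f xs = funMap f fun i => e (e.symm (xs i))
      exact congrArg (funMap f) (funext fun i => (e.apply_symm_apply (xs i)).symm)
  let φ : M → N := fun m => (e.symm m).realize Empty.elim
  have hφ : IsHom L φ := fun n f xs => by
    change (e.symm (funMap f xs)).realize _ = _
    rw [he_symm]
    rfl
  exact ⟨φ, hφ, fun ψ hψ => IsHom.eq_of_surjective_realize hbij.2 hψ hφ⟩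

end FirstOrder.Language

theorem algebra_admitsRecursion_iff_general {L : FirstOrder.Language.{u, v}}
    (M : Type w) [L.Structure M] :
    (∀ (N : Type w) [L.Structure N],
        ∃! h : M → N, ∀ (n : ℕ) (f : L.Functions n) (xs : Fin n → M),
          h (funMap f xs) = funMap f (h ∘ xs)) ↔
      ((∀ S : L.Substructure M, S = ⊤) ∧
        (∀ (n : ℕ) (f : L.Functions n),
          Function.Injective (fun xs : Fin n → M => funMap f xs)) ∧
        (∀ (m n : ℕ) (f : L.Functions m) (g : L.Functions n),
          (⟨m, f⟩ : Σ k, L.Functions k) ≠ ⟨n, g⟩ →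
            ∀ (xs : Fin m → M) (ys : Fin n → M),
              funMap f xs ≠ funMap g ys)) := by
  constructor
  · intro (hM : AdmitsRecursion L M)
    exact ⟨hM.eq_top, hM.funMap_injective, fun _ _ _ _ hfg => hM.funMap_ne_funMap hfg⟩
  · rintro ⟨hind, hinj, hdisj⟩
    exact admitsRecursion_of_bijective_realize
      ⟨injective_realize_of_funMap_injective hinj hdisj, surjective_realize_of_forall_eq_top hind⟩

/-- Let `L` be a first-order language with no relation symbols and `M` an
`L`-structure.  Then `M` admits recursion (to every `L`-structure there is a
unique `L`-homomorphism from `M`) if and only if `M` admits induction (its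
only substructure is itself), every interpreted function of `M` is injective,
and the ranges of the interpretations of distinct function symbols are
pairwise disjoint. -/
theorem algebra_admitsRecursion_iff {L : FirstOrder.Language.{u, v}}
    (hrel : ∀ n, IsEmpty (L.Relations n)) (M : Type w) [L.Structure M] :
    (∀ (N : Type w) [L.Structure N],
        ∃! h : M → N, ∀ (n : ℕ) (f : L.Functions n) (xs : Fin n → M),
          h (funMap f xs) = funMap f (h ∘ xs)) ↔
      ((∀ S : L.Substructure M, S = ⊤) ∧
        (∀ (n : ℕ) (f : L.Functions n),
          Function.Injective (fun xs : Fin n → M => funMap f xs)) ∧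
        (∀ (m n : ℕ) (f : L.Functions m) (g : L.Functions n),
          (⟨m, f⟩ : Σ k, L.Functions k) ≠ ⟨n, g⟩ →
            ∀ (xs : Fin m → M) (ys : Fin n → M),
              funMap f xs ≠ funMap g ys)) :=
  algebra_admitsRecursion_iff_general M
end

section
/- Let C be the class of hereditary sets A such that (i) every element of A is either ∅ or {x} for some x ∈ A, and (ii) there is a well-ordering < of the elements of A such that x < {x} whenever both x and {x} are elements of A. Then the class ⋃C of all sets belonging to some member of C contains ∅, is closed under x ↦ {x}, and every subclass of ⋃C that contains ∅ and is closed under x ↦ {x} contains every member of ⋃C; hence (⋃C, ∅, x ↦ {x}) is a simply infinite system. -/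
/-!
Every member of a set `A ∈ ZmWO` is a Zermelo numeral `{…{∅}…}`: a least non-numeral `m` of `A`
is `∅` or `{x}` with `x ∈ A` and `x < m`, so `x`, and hence `m`, is a numeral. Conversely the
numerals of index `≤ n` form a member of `ZmWO`, ordered by index. So `UZmWO` is exactly the set of
Zermelo numerals, on which the Peano axioms hold because `x ↦ {x}` is injective and misses `∅`.
-/

/-- The class `C` of sets `A` all of whose elements are `∅` or singletons of
elements, and which carry a well-ordering `<` of their elements satisfying
`x < {x}` whenever both `x` and `{x}` are elements. -/
def ZmWO : Set ZFSet :=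
  {A | (∀ y ∈ A, y = ∅ ∨ ∃ x ∈ A, y = ({x} : ZFSet)) ∧
    ∃ r : ZFSet → ZFSet → Prop,
      (∀ x ∈ A, ¬ r x x) ∧
      (∀ x ∈ A, ∀ y ∈ A, ∀ z ∈ A, r x y → r y z → r x z) ∧
      (∀ x ∈ A, ∀ y ∈ A, r x y ∨ x = y ∨ r y x) ∧
      (∀ b : ZFSet, b ⊆ A → b ≠ ∅ → ∃ m ∈ b, ∀ y ∈ b, ¬ r y m) ∧
      (∀ x ∈ A, ({x} : ZFSet) ∈ A → r x ({x} : ZFSet))}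

/-- The union class of `ZmWO`. -/
def UZmWO : Set ZFSet := {z | ∃ A ∈ ZmWO, z ∈ A}

universe u

open Set

lemma ZFSet.singleton_ne_empty (x : ZFSet.{u}) : ({x} : ZFSet.{u}) ≠ ∅ := fun h =>
  ZFSet.notMem_empty x (h ▸ ZFSet.mem_singleton.mpr rfl)

def zermelo : ℕ → ZFSet.{u}
  | 0 => ∅
  | n + 1 => {zermelo n}

lemma zermelo_injective : Function.Injective zermelo.{u} := by
  intro m n h
  induction m generalizing n with
  | zero => cases n with
    | zero => rfl
    | succ n => exact absurd h.symm (ZFSet.singleton_ne_empty _)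
  | succ m ih => cases n with
    | zero => exact absurd h (ZFSet.singleton_ne_empty _)
    | succ n => exact congrArg (· + 1) (ih (ZFSet.singleton_injective h))

lemma mem_ZmWO_of_injOn {A : ZFSet.{u}} (hA : ∀ y ∈ A, y = ∅ ∨ ∃ x ∈ A, y = ({x} : ZFSet))
    {f : ZFSet.{u} → ℕ} (hf : InjOn f {x | x ∈ A})
    (hsucc : ∀ x ∈ A, ({x} : ZFSet) ∈ A → f x < f {x}) : A ∈ ZmWO := by
  refine ⟨hA, fun x y => f x < f y, fun x _ => lt_irrefl _, fun x _ y _ z _ => lt_trans,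
    fun x hx y hy => ?_, fun b _ hb => ?_, hsucc⟩
  · rcases lt_trichotomy (f x) (f y) with h | h | h
    exacts [.inl h, .inr (.inl (hf hx hy h)), .inr (.inr h)]
  · exact (InvImage.wf f wellFounded_lt).has_min {x | x ∈ b}
      ((ZFSet.eq_empty_or_nonempty b).resolve_left hb)

noncomputable def zermeloSegment (n : ℕ) : ZFSet.{u} :=
  ZFSet.range fun k : Fin (n + 1) => zermelo k

lemma mem_zermeloSegment {n : ℕ} {x : ZFSet.{u}} :
    x ∈ zermeloSegment n ↔ ∃ k ≤ n, zermelo k = x := by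
  simp only [zermeloSegment, ZFSet.mem_range]
  exact ⟨fun ⟨k, hk⟩ => ⟨k, Nat.lt_succ_iff.mp k.2, hk⟩,
    fun ⟨k, hk, hx⟩ => ⟨⟨k, Nat.lt_succ_of_le hk⟩, hx⟩⟩

lemma zermeloSegment_mem_ZmWO (n : ℕ) : zermeloSegment.{u} n ∈ ZmWO := by
  have hinv : ∀ k, Function.invFun zermelo (zermelo.{u} k) = k :=
    Function.leftInverse_invFun zermelo_injective
  refine mem_ZmWO_of_injOn (f := Function.invFun zermelo) ?_ ?_ ?_
  · rintro _ hy
    obtain ⟨_ | k, hk, rfl⟩ := mem_zermeloSegment.mp hy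
    exacts [.inl rfl, .inr ⟨zermelo k, mem_zermeloSegment.mpr ⟨k, by omega, rfl⟩, rfl⟩]
  · rintro _ hx _ hy h
    obtain ⟨i, -, rfl⟩ := mem_zermeloSegment.mp hx
    obtain ⟨j, -, rfl⟩ := mem_zermeloSegment.mp hy
    rw [hinv, hinv] at h
    rw [h]
  · rintro _ hx -
    obtain ⟨k, -, rfl⟩ := mem_zermeloSegment.mp hx
    exact (hinv k).trans_lt ((Nat.lt_succ_self k).trans_eq (hinv (k + 1)).symm)

lemma mem_range_zermelo_of_mem_ZmWO {A : ZFSet.{u}} (hA : A ∈ ZmWO) {x : ZFSet.{u}} (hx : x ∈ A) :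
    x ∈ range zermelo := by
  obtain ⟨hpred, r, -, -, -, hwf, hsucc⟩ := hA
  by_contra hx'
  obtain ⟨m, hm, hmin⟩ := hwf (A.sep (· ∉ range zermelo)) (fun _ hz => (ZFSet.mem_sep.mp hz).1)
    (fun h => ZFSet.notMem_empty x (h ▸ ZFSet.mem_sep.mpr ⟨hx, hx'⟩))
  obtain ⟨hmA, hm⟩ := ZFSet.mem_sep.mp hm
  rcases hpred m hmA with rfl | ⟨y, hyA, rfl⟩
  · exact hm ⟨0, rfl⟩
  · by_cases hy : y ∈ range zermelo
    · obtain ⟨n, rfl⟩ := hy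
      exact hm ⟨n + 1, rfl⟩
    · exact hmin y (ZFSet.mem_sep.mpr ⟨hyA, hy⟩) (hsucc y hyA hmA)

lemma UZmWO_eq_range_zermelo : UZmWO.{u} = range zermelo := by
  refine Subset.antisymm (fun _ ⟨_, hA, hx⟩ => mem_range_zermelo_of_mem_ZmWO hA hx) ?_
  rintro _ ⟨n, rfl⟩
  exact ⟨zermeloSegment n, zermeloSegment_mem_ZmWO n, mem_zermeloSegment.mpr ⟨n, le_rfl, rfl⟩⟩

/-- `(⋃C, ∅, x ↦ {x})` is a simply infinite system: it contains `∅`, is closed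
under `x ↦ {x}`, admits induction, `∅` is not in the range of `x ↦ {x}`, and
`x ↦ {x}` is injective on it. -/
theorem uZmWO_simply_infinite :
    (∅ : ZFSet) ∈ UZmWO ∧
      (∀ x ∈ UZmWO, ({x} : ZFSet) ∈ UZmWO) ∧
      (∀ D : Set ZFSet, D ⊆ UZmWO → (∅ : ZFSet) ∈ D →
        (∀ x ∈ D, ({x} : ZFSet) ∈ D) → ∀ z ∈ UZmWO, z ∈ D) ∧
      (∀ x ∈ UZmWO, ({x} : ZFSet) ≠ ∅) ∧
      (∀ x ∈ UZmWO, ∀ y ∈ UZmWO, ({x} : ZFSet) = ({y} : ZFSet) → x = y) := by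
  -- each conjunct lives in its own universe, so a single `rw` would rewrite only the first
  simp only [UZmWO_eq_range_zermelo]
  refine ⟨⟨0, rfl⟩, ?_, ?_, fun x _ => ZFSet.singleton_ne_empty x,
    fun _ _ _ _ h => ZFSet.singleton_injective h⟩
  · rintro _ ⟨n, rfl⟩
    exact ⟨n + 1, rfl⟩
  · rintro D - h0 hsucc _ ⟨n, rfl⟩
    induction n with
    | zero => exact h0
    | succ n ih => exact hsucc _ ih
end
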